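/- The inverse of the monotone domination order ⪯ is a simulation on the region-abstracted transition system H: whenever W₁ ⪯ W₂ and W₂ --a--> W₂' in H, there exists W₁' such that W₁ --a--> W₁' in H and W₁' ⪯ W₂'. -/

import Mathlib

/-- Clock constraints over a set `C` of clocks: comparisons with natural
number constants, closed under conjunction and negation. -/
inductive ClockConstraint (C : Type) : Type where
  | lt : C → ℕ → ClockConstraint C
  | le : C → ℕ → ClockConstraint C
  | conj : ClockConstraint C → ClockConstraint C → ClockConstraint C
  | neg : ClockConstraint C → ClockConstraint C

/-- Satisfaction of a clock constraint by a clock valuation. -/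
def ClockConstraint.sat {C : Type} (v : C → NNReal) : ClockConstraint C → Prop
  | .lt x c => (v x : ℝ) < (c : ℝ)
  | .le x c => (v x : ℝ) ≤ (c : ℝ)
  | .conj s t => s.sat v ∧ t.sat v
  | .neg s => ¬ s.sat v

/-- Positive boolean formulas over a set `X` of propositions. -/
inductive PosBool (X : Type) : Type where
  | atom : X → PosBool X
  | conj : PosBool X → PosBool X → PosBool X
  | disj : PosBool X → PosBool X → PosBool X

/-- Evaluation of a positive boolean formula under a valuation of atoms. -/
def PosBool.eval {X : Type} (f : X → Prop) : PosBool X → Prop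
  | .atom x => f x
  | .conj b c => b.eval f ∧ c.eval f
  | .disj b c => b.eval f ∨ c.eval f

/-- A positive boolean formula is disjunction-free (purely conjunctive). -/
def PosBool.orFree {X : Type} : PosBool X → Prop
  | .atom _ => True
  | .conj b c => b.orFree ∧ c.orFree
  | .disj _ _ => False

/-- A positive boolean formula is conjunction-free (purely disjunctive). -/
def PosBool.andFree {X : Type} : PosBool X → Prop
  | .atom _ => True
  | .conj _ _ => False
  | .disj b c => b.andFree ∧ c.andFree

open Classical in
/-- Reset the clocks in `r` to zero. -/
noncomputable def resetVal {C : Type} (v : C → NNReal) (r : Set C) : C → NNReal :=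
  fun x => if x ∈ r then 0 else v x

/-- A (finite) timed word: each letter comes with the delay elapsed since the
previous letter (a nonnegative real). -/
abbrev TimedWord (A : Type) : Type := List (A × NNReal)
/-- A one-clock alternating timed automaton whose transition formulas are in
disjunctive normal form: for each location and letter, a finite list of
pairs (guard, DNF), where a DNF is a nonempty list of disjuncts, each
disjunct a nonempty list of atoms `(target location, reset flag)`.  The
`partition` field is the Partition condition. -/
structure ATA1 (A Q : Type) where
  init : Q
  accept : Set Q
  trans : Q → A → List (ClockConstraint Unit × List (List (Q × Bool)))
  partition : ∀ (q : Q) (a : A) (v : NNReal),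
    ∃! gb : ClockConstraint Unit × List (List (Q × Bool)),
      gb ∈ trans q a ∧ gb.1.sat (fun _ => v)
  dnf_nonempty : ∀ (q : Q) (a : A), ∀ gb ∈ trans q a,
    gb.2 ≠ [] ∧ ∀ d ∈ gb.2, d ≠ []

/-- Acceptance of a timed word (delay time-stamps) from a configuration:
Eve picks a disjunct, and all its atoms must accept the rest of the word. -/
def ATA1.AccFrom {A Q : Type} (M : ATA1 A Q) : TimedWord A → Q → NNReal → Prop
  | [], q, _ => q ∈ M.accept
  | (a, t) :: w, q, v =>
      ∃ gb ∈ M.trans q a, gb.1.sat (fun _ => v + t) ∧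
        ∃ d ∈ gb.2, ∀ qb ∈ d, M.AccFrom w qb.1 (if qb.2 then 0 else v + t)

/-- The timed language of a one-clock DNF alternating timed automaton. -/
def ATA1.lang {A Q : Type} (M : ATA1 A Q) : Set (TimedWord A) :=
  { w | M.AccFrom w M.init 0 }

/-- One transition of the transition system `T`: states are finite sets of
configurations `(q, v)`; on `(a, t)` every configuration advances by `t`,
one disjunct of the (unique) applicable transition formula is chosen for
each configuration, and the resulting configurations are collected. -/
def ATA1.Tstep {A Q : Type} (M : ATA1 A Q) (a : A) (t : NNReal)
    (P P' : Set (Q × NNReal)) : Prop :=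
  ∃ choice : Q × NNReal → List (Q × Bool),
    (∀ c ∈ P, ∃ gb ∈ M.trans c.1 a, gb.1.sat (fun _ => c.2 + t) ∧ choice c ∈ gb.2) ∧
    P' = ⋃ c ∈ P, { c' | ∃ qb ∈ choice c, c' = (qb.1, if qb.2 then 0 else c.2 + t) }

/-- A transition of the untimed transition system `T̂`: a transition of `T`
with the time information erased. -/
def ATA1.UStep {A Q : Type} (M : ATA1 A Q) (a : A) (P P' : Set (Q × NNReal)) : Prop :=
  ∃ t : NNReal, M.Tstep a t P P'

/-- A state of `T` (or `T̂`) is bad iff all its locations are accepting. -/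
def ATA1.Bad {A Q : Type} (M : ATA1 A Q) (P : Set (Q × NNReal)) : Prop :=
  ∀ c ∈ P, c.1 ∈ M.accept
/-- The largest constant occurring in a clock constraint. -/
def ClockConstraint.maxConst {C : Type} : ClockConstraint C → ℕ
  | .lt _ c => c
  | .le _ c => c
  | .conj s t => max s.maxConst t.maxConst
  | .neg s => s.maxConst

/-- The largest constant `c_max` occurring in the transition function. -/
noncomputable def ATA1.cmax {A Q : Type} [Fintype A] [Fintype Q] (M : ATA1 A Q) : ℕ :=
  Finset.univ.sup fun q : Q => Finset.univ.sup fun a : A =>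
    ((M.trans q a).map fun gb => gb.1.maxConst).foldr max 0

open Classical in
/-- The index of the region of a clock value `v`, for maximal constant `K`:
the regions `{0}, (0,1), {1}, (1,2), …, {K}, (K,∞)` are numbered
`0, 1, …, 2K, 2K+1`. -/
noncomputable def regIdx (K : ℕ) (v : NNReal) : ℕ :=
  if (K : NNReal) < v then 2 * K + 1
  else if (⌊v⌋₊ : NNReal) = v then 2 * ⌊v⌋₊ else 2 * ⌊v⌋₊ + 1

/-- `W = H(P)`: the word `W` over `Λ = 𝒫(Q × reg)` is obtained from the set
`P` of configurations by replacing each `(q, v)` by `(q, reg v, fract v)`,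
sorting by the fractional parts, grouping configurations with equal
fractional parts into one letter, and forgetting the fractional parts. -/
def IsAbstraction {Q : Type} (K : ℕ) (P : Set (Q × NNReal))
    (W : List (Set (Q × ℕ))) : Prop :=
  ∃ fs : List ℝ,
    fs.Pairwise (· < ·) ∧
    (∀ f : ℝ, f ∈ fs ↔ ∃ c ∈ P, Int.fract (c.2 : ℝ) = f) ∧
    W.length = fs.length ∧
    ∀ (i : ℕ) (hw : i < W.length) (hi : i < fs.length),
      W.get ⟨i, hw⟩ =
        { qr | ∃ c ∈ P, Int.fract (c.2 : ℝ) = fs.get ⟨i, hi⟩ ∧ qr = (c.1, regIdx K c.2) }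

/-- A transition (labelled by letter `a`) of the region-abstracted transition
system `H`: there are states `P`, `P'` of `T̂` with a transition
`P --a--> P'` whose abstractions are the two given words. -/
def HStep {A Q : Type} [Fintype A] [Fintype Q] (M : ATA1 A Q) (a : A)
    (W W' : List (Set (Q × ℕ))) : Prop :=
  ∃ P P' : Set (Q × NNReal), P.Finite ∧
    IsAbstraction M.cmax P W ∧ IsAbstraction M.cmax P' W' ∧ M.UStep a P P'

/-- A state of `H` is bad iff every location occurring in one of its letters
is accepting. -/
def BadW {Q : Type} (F : Set Q) (W : List (Set (Q × ℕ))) : Prop :=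
  ∀ s ∈ W, ∀ qr ∈ s, qr.1 ∈ F

/-- The monotone domination ordering on words over a powerset alphabet:
`W₁ ⪯ W₂` iff there is a strictly increasing map of positions along which
the letters of `W₁` are included in those of `W₂`. -/
def MonDom {X : Type} (W₁ W₂ : List (Set X)) : Prop :=
  ∃ f : Fin W₁.length → Fin W₂.length,
    StrictMono f ∧ ∀ i : Fin W₁.length, W₁.get i ⊆ W₂.get (f i)

/-!
If `W₁ ⪯ W₂ = H(P₂)`, keep from `P₂` exactly the configurations whose fractional part is the one
the domination map assigns to some letter of `W₁` and whose (location, region) pair lies in that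
letter; since `W₁` is itself an abstraction its letters are nonempty, so this subset `P₁` has
`H(P₁) = W₁`. Restricting the disjunct choices of a step `P₂ → P₂'` to `P₁` yields a step
`P₁ → P₁'` with `P₁' ⊆ P₂'`, and abstraction turns inclusion of configuration sets into monotone
domination, because the sorted fractional parts of `P₁'` form a sublist of those of `P₂'`.
-/

def regionLetter {Q : Type} (K : ℕ) (P : Set (Q × NNReal)) (f : ℝ) : Set (Q × ℕ) :=
  {qr | ∃ c ∈ P, Int.fract (c.2 : ℝ) = f ∧ qr = (c.1, regIdx K c.2)}

lemma regionLetter_mono {Q : Type} (K : ℕ) {P P' : Set (Q × NNReal)} (h : P ⊆ P') (f : ℝ) :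
    regionLetter K P f ⊆ regionLetter K P' f := by
  rintro _ ⟨c, hc, hf, rfl⟩
  exact ⟨c, h hc, hf, rfl⟩

lemma isAbstraction_iff {Q : Type} {K : ℕ} {P : Set (Q × NNReal)} {W : List (Set (Q × ℕ))} :
    IsAbstraction K P W ↔ ∃ fs : List ℝ, fs.Pairwise (· < ·) ∧
      (∀ f : ℝ, f ∈ fs ↔ ∃ c ∈ P, Int.fract (c.2 : ℝ) = f) ∧ W = fs.map (regionLetter K P) := by
  constructor
  · rintro ⟨fs, hsort, hmem, hlen, hget⟩
    refine ⟨fs, hsort, hmem, List.ext_get (by simp [hlen]) fun i hw _ => ?_⟩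
    simpa [regionLetter] using hget i hw (hlen ▸ hw)
  · rintro ⟨fs, hsort, hmem, rfl⟩
    exact ⟨fs, hsort, hmem, List.length_map _, fun i _ _ => by simp [regionLetter]⟩

lemma exists_isAbstraction {Q : Type} (K : ℕ) {P : Set (Q × NNReal)} (hP : P.Finite) :
    ∃ W, IsAbstraction K P W := by
  classical
  let fs := (hP.toFinset.image fun c => Int.fract (c.2 : ℝ)).sort (· ≤ ·)
  refine ⟨fs.map (regionLetter K P), isAbstraction_iff.2 ⟨fs, ?_, fun f => ?_, rfl⟩⟩
  · exact (Finset.sortedLT_sort _).pairwise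
  · simp [fs]

lemma IsAbstraction.nonempty_of_mem {Q : Type} {K : ℕ} {P : Set (Q × NNReal)}
    {W : List (Set (Q × ℕ))} (h : IsAbstraction K P W) {S : Set (Q × ℕ)} (hS : S ∈ W) :
    S.Nonempty := by
  obtain ⟨fs, -, hmem, rfl⟩ := isAbstraction_iff.1 h
  obtain ⟨f, hf, rfl⟩ := List.mem_map.1 hS
  obtain ⟨c, hc, hcf⟩ := (hmem f).1 hf
  exact ⟨_, c, hc, hcf, rfl⟩

lemma monDom_map_of_sublist {α X : Type} {l l' : List α} (h : l.Sublist l') {F G : α → Set X}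
    (hFG : ∀ x, F x ⊆ G x) : MonDom (l.map F) (l'.map G) := by
  obtain ⟨e, he⟩ := List.sublist_iff_exists_fin_orderEmbedding_get_eq.1 h
  refine ⟨fun i => Fin.cast (by simp) (e (Fin.cast (by simp) i)), ?_, fun i => ?_⟩
  · intro i j hij
    exact e.strictMono hij
  · have hi := he (Fin.cast (by simp) i)
    simp only [List.get_eq_getElem, Fin.val_cast] at hi
    simpa [hi] using hFG _

lemma IsAbstraction.monDom_of_subset {Q : Type} {K : ℕ} {P P' : Set (Q × NNReal)}
    {W W' : List (Set (Q × ℕ))} (h : IsAbstraction K P W) (h' : IsAbstraction K P' W')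
    (hPP' : P ⊆ P') : MonDom W W' := by
  obtain ⟨fs, hsort, hmem, rfl⟩ := isAbstraction_iff.1 h
  obtain ⟨fs', hsort', hmem', rfl⟩ := isAbstraction_iff.1 h'
  have hsub : fs ⊆ fs' := fun f hf => by
    obtain ⟨c, hc, hcf⟩ := (hmem f).1 hf
    exact (hmem' f).2 ⟨c, hPP' hc, hcf⟩
  exact monDom_map_of_sublist
    (List.sublist_of_subperm_of_pairwise (List.subperm_of_subset hsort.nodup hsub) hsort hsort')
    (regionLetter_mono K hPP')

lemma isAbstraction_of_subset_regionLetter {Q : Type} {K : ℕ} {P : Set (Q × NNReal)}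
    {W : List (Set (Q × ℕ))} {g : Fin W.length → ℝ} (hg : StrictMono g) (hsub : ∀ i, W.get i ⊆ regionLetter K P (g i))
    (hne : ∀ i, (W.get i).Nonempty) :
    IsAbstraction K {c ∈ P | ∃ i, Int.fract (c.2 : ℝ) = g i ∧ (c.1, regIdx K c.2) ∈ W.get i} W := by
  refine isAbstraction_iff.2 ⟨List.ofFn g, (List.sortedLT_ofFn_iff.2 hg).pairwise, fun f => ?_, ?_⟩
  · rw [List.mem_ofFn]
    constructor
    · rintro ⟨i, rfl⟩
      obtain ⟨qr, hqr⟩ := hne i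
      obtain ⟨c, hc, hcf, rfl⟩ := hsub i hqr
      exact ⟨c, ⟨hc, i, hcf, hqr⟩, hcf⟩
    · rintro ⟨c, ⟨-, i, hcf, -⟩, rfl⟩
      exact ⟨i, hcf.symm⟩
  · conv_lhs => rw [← List.ofFn_get W]
    rw [List.map_ofFn]
    congr 1
    funext i
    refine Set.Subset.antisymm (fun qr hqr => ?_) ?_
    · obtain ⟨c, hc, hcf, rfl⟩ := hsub i hqr
      exact ⟨c, ⟨hc, i, hcf, hqr⟩, hcf, rfl⟩
    · rintro _ ⟨c, ⟨-, j, hcj, hmem⟩, hci, rfl⟩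
      rwa [← hg.injective (hcj.symm.trans hci)]

lemma IsAbstraction.exists_subset_of_monDom {Q : Type} {K : ℕ} {P₂ : Set (Q × NNReal)}
    {W₁ W₂ : List (Set (Q × ℕ))} (h₂ : IsAbstraction K P₂ W₂) (hdom : MonDom W₁ W₂)
    (hne : ∀ S ∈ W₁, S.Nonempty) : ∃ P₁ ⊆ P₂, IsAbstraction K P₁ W₁ := by
  obtain ⟨fs, hsort, -, rfl⟩ := isAbstraction_iff.1 h₂
  obtain ⟨e, he, hsub⟩ := hdom
  let g : Fin W₁.length → ℝ := fun i => fs[(e i : ℕ)]'(by simpa using (e i).2)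
  have hg : StrictMono g := fun i j hij =>
    List.pairwise_iff_getElem.1 hsort _ _ _ _ (he hij)
  refine ⟨_, fun c hc => hc.1, isAbstraction_of_subset_regionLetter hg (fun i => ?_)
    fun i => hne _ (List.get_mem _ _)⟩
  simpa [g] using hsub i

lemma ATA1.Tstep.exists_finite_subset_of_subset {A Q : Type} {M : ATA1 A Q} {a : A} {t : NNReal}
    {P₂ P₂' P₁ : Set (Q × NNReal)} (h : M.Tstep a t P₂ P₂') (hP₁ : P₁.Finite) (hsub : P₁ ⊆ P₂) :
    ∃ P₁', P₁'.Finite ∧ P₁' ⊆ P₂' ∧ M.Tstep a t P₁ P₁' := by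
  obtain ⟨choice, hchoice, rfl⟩ := h
  refine ⟨_, hP₁.biUnion fun c _ => ?_, Set.biUnion_mono hsub fun _ _ => subset_rfl,
    choice, fun c hc => hchoice c (hsub hc), rfl⟩
  refine ((choice c).finite_toSet.image fun qb => (qb.1, if qb.2 then 0 else c.2 + t)).subset ?_
  rintro _ ⟨qb, hqb, rfl⟩
  exact ⟨qb, hqb, rfl⟩

/-- The inverse of the monotone domination ordering is a
simulation on the region-abstracted transition system `H`: if `W₁ ⪯ W₂` are
states of `H` and `W₂ --a--> W₂'`, then `W₁ --a--> W₁'` for some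
`W₁' ⪯ W₂'`. -/
theorem monotone_domination_inverse_simulation
    {A Q : Type} [Fintype A] [Fintype Q] (M : ATA1 A Q)
    {W₁ W₂ W₂' : List (Set (Q × ℕ))} {a : A}
    (hW₁ : ∃ P₁ : Set (Q × NNReal), P₁.Finite ∧ IsAbstraction M.cmax P₁ W₁)
    (hdom : MonDom W₁ W₂) (hstep : HStep M a W₂ W₂') :
    ∃ W₁' : List (Set (Q × ℕ)), HStep M a W₁ W₁' ∧ MonDom W₁' W₂' := by
  obtain ⟨P₀, -, habs₀⟩ := hW₁
  obtain ⟨P₂, P₂', hP₂, habs₂, habs₂', t, hstep₂⟩ := hstep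
  obtain ⟨P₁, hsub, habs₁⟩ :=
    habs₂.exists_subset_of_monDom hdom fun _ hS => habs₀.nonempty_of_mem hS
  have hP₁ : P₁.Finite := hP₂.subset hsub
  obtain ⟨P₁', hP₁', hsub', hstep₁⟩ := hstep₂.exists_finite_subset_of_subset hP₁ hsub
  obtain ⟨W₁', habs₁'⟩ := exists_isAbstraction M.cmax hP₁'
  exact ⟨W₁', ⟨P₁, P₁', hP₁, habs₁, habs₁', t, hstep₁⟩, habs₁'.monDom_of_subset habs₂' hsub'⟩
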